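/- Let K be an algebraically closed field, n ≥ 2, and let F ∈ K[x_1,…,x_n] be homogeneous of degree δ ≥ 2 such that F = 0 defines a smooth hypersurface in P^{n−1}. Then the set of common zeros of ∂F/∂x_1,…,∂F/∂x_n in P^{n−1} is finite. (In particular this holds when char K divides δ, in which case this zero set need not be empty.) -/

import Mathlib

open MvPolynomial

noncomputable section

/-- A polynomial differential `m`-form over `K[x_1,…,x_n]`, recorded by its coefficients:
to each subset `T ⊆ {1,…,n}` of cardinality `m` (the index set `i_1 < ⋯ < i_m` of
`dx_{i_1} ∧ ⋯ ∧ dx_{i_m}`) we assign a polynomial coefficient. -/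
abbrev MForm (K : Type*) [CommSemiring K] (n m : ℕ) : Type _ :=
  ∀ T : Finset (Fin n), T.card = m → MvPolynomial (Fin n) K

/-- The wedge product `dg ∧ ω` of the exterior derivative of `g` with an `m`-form `ω`:
its coefficient on `T = {i_0 < ⋯ < i_m}` is `∑ k, (-1)^k (∂g/∂x_{i_k}) ω(T \ {i_k})`. -/
def wedgeD {K : Type*} [CommRing K] {n m : ℕ} (g : MvPolynomial (Fin n) K)
    (ω : MForm K n m) : MForm K n (m + 1) := fun T hT =>
  ∑ j ∈ T.attach,
    (-1 : MvPolynomial (Fin n) K) ^ (T.filter (fun i => i < j.1)).card *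
      pderiv j.1 g * ω (T.erase j.1) (by rw [Finset.card_erase_of_mem j.2]; omega)

/-- `g` is homogeneous of (possibly negative) degree `d : ℤ`; by convention the only
homogeneous polynomial of negative degree is `0`. -/
def HomogZ {K : Type*} [CommSemiring K] {σ : Type*} (g : MvPolynomial σ K) (d : ℤ) : Prop :=
  g = 0 ∨ ∃ d' : ℕ, (d' : ℤ) = d ∧ g.IsHomogeneous d'

/-- A list of ring elements is a regular sequence when each entry is a nonzerodivisor
modulo the ideal generated by the preceding entries. -/
def IsRegSeq {R : Type*} [CommRing R] (rs : List R) : Prop :=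
  ∀ (i : ℕ) (hi : i < rs.length) (x : R),
    rs[i] * x ∈ Ideal.span {y | ∃ (j : ℕ) (hj : j < i), y = rs[j]'(hj.trans hi)} →
    x ∈ Ideal.span {y | ∃ (j : ℕ) (hj : j < i), y = rs[j]'(hj.trans hi)}

/-- The origin is an isolated critical point of (the polynomial map defined by) `h`:
it is a common zero of all partial derivatives `∂h/∂x_i`, and there is a Zariski-open
neighborhood `U` of the origin (wlog a basic open set `u ≠ 0` with `u(0) ≠ 0`) on which
the origin is the only common zero of the `∂h/∂x_i`. -/
def IsIsolatedCriticalAtZero {K : Type*} [CommSemiring K] {σ : Type*}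
    (h : MvPolynomial σ K) : Prop :=
  (∀ i, eval (0 : σ → K) (pderiv i h) = 0) ∧
  ∃ u : MvPolynomial σ K, eval (0 : σ → K) u ≠ 0 ∧
    ∀ y : σ → K, eval y u ≠ 0 → (∀ i, eval y (pderiv i h) = 0) → y = 0

/-- The dehomogenization of `F` in the affine chart `x_j = 1` of `ℙ^{n-1}`, centered at the
point `a` (which should satisfy `a j = 1`): a polynomial in the `n-1` variables `i ≠ j`. -/
def chartPoly {K : Type*} [CommRing K] {n : ℕ} (F : MvPolynomial (Fin n) K) (j : Fin n)
    (a : Fin n → K) : MvPolynomial {i : Fin n // i ≠ j} K :=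
  aeval (fun i : Fin n => if h : i = j then 1 else X ⟨i, h⟩ + C (a i)) F

/-- `g` is weighted homogeneous of total degree `d`: there are positive integer weights
`α_i` with gcd `1` such that every monomial of `g` has weighted degree `d`
(equivalently, `g(λ^{α_1}x_1,…) = λ^d g(x)`). -/
def IsWeightedHomogTD {K : Type*} [CommSemiring K] {σ : Type*} [Fintype σ]
    (g : MvPolynomial σ K) (d : ℕ) : Prop :=
  ∃ α : σ → ℕ, (∀ i, 0 < α i) ∧ Finset.univ.gcd α = 1 ∧ IsWeightedHomogeneous α g d

/-- The hypersurface `h = 0` has a weighted homogeneous singularity at the origin, of total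
degree `d`: the complete local ring `K[[x]]/(h)` is isomorphic as a `K`-algebra to
`K[[x]]/(g)` for some weighted homogeneous `g` of total degree `d`. -/
def WeightedHomogSing {K : Type*} [Field K] {σ : Type*} [Fintype σ]
    (h : MvPolynomial σ K) (d : ℕ) : Prop :=
  ∃ g : MvPolynomial σ K, IsWeightedHomogTD g d ∧
    Nonempty ((MvPowerSeries σ K ⧸ Ideal.span {(h : MvPowerSeries σ K)}) ≃ₐ[K]
      MvPowerSeries σ K ⧸ Ideal.span {(g : MvPowerSeries σ K)})

/-- The common zero locus, in the projective space `ℙ^{n-1}`, of a set `S` of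
(homogeneous) polynomials. -/
def projZeros {K : Type*} [Field K] {n : ℕ} (S : Set (MvPolynomial (Fin n) K)) :
    Set (Projectivization K (Fin n → K)) :=
  {x | ∃ (v : Fin n → K) (hv : v ≠ 0), Projectivization.mk K v hv = x ∧ ∀ g ∈ S, eval v g = 0}

/-- A homogeneous polynomial `G` in `m` variables defines a smooth hypersurface in `ℙ^{m-1}`:
`G` and its partial derivatives have no common zero in `ℙ^{m-1}`. -/
def SmoothProj {K : Type*} [Field K] {σ : Type*} (G : MvPolynomial σ K) : Prop :=
  ∀ y : σ → K, y ≠ 0 → ¬ (eval y G = 0 ∧ ∀ i, eval y (pderiv i G) = 0)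

/-- `F(x_1,…,x_{n-1},0)`, as a polynomial in the first `n-1` variables. -/
def truncAtLast {K : Type*} [CommRing K] {n : ℕ} (F : MvPolynomial (Fin n) K) :
    MvPolynomial (Fin (n - 1)) K :=
  aeval (fun i : Fin n => if h : (i : ℕ) < n - 1 then X (⟨i, h⟩ : Fin (n - 1)) else 0) F

/-- `F(y_1,…,y_{n-1},1)`, as a polynomial in the first `n-1` variables. -/
def dehomAtLast {K : Type*} [CommRing K] {n : ℕ} (F : MvPolynomial (Fin n) K) :
    MvPolynomial (Fin (n - 1)) K :=
  aeval (fun i : Fin n => if h : (i : ℕ) < n - 1 then X (⟨i, h⟩ : Fin (n - 1)) else 1) F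

/-- The point `(b, 1) ∈ K^n` lying over `b ∈ K^{n-1}` (affine chart `x_n = 1`). -/
def liftPt {K : Type*} [CommRing K] {n : ℕ} (b : Fin (n - 1) → K) : Fin n → K :=
  fun i => if h : (i : ℕ) < n - 1 then b ⟨i, h⟩ else 1

/-- Context of the paper: `f` has degree `δ ≥ 2`, `1 ≤ δ' ≤ δ - 1`, and
`f = f^(δ) + f^(δ') + (terms of degree < δ')`, with `f^(δ')` the (nonzero) homogeneous
component of second-highest degree. -/
def Setup {K : Type*} [Field K] {n : ℕ} (δ δ' : ℕ) (f : MvPolynomial (Fin n) K) : Prop :=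
  f.totalDegree = δ ∧ 2 ≤ δ ∧ 1 ≤ δ' ∧ δ' < δ ∧
  (∀ j, δ' < j → j < δ → homogeneousComponent j f = 0) ∧
  homogeneousComponent δ' f ≠ 0

/-- Hypothesis (A): `p ∤ δ`, `p ∤ δ'`; every singular point of the hypersurface
`f^(δ) = 0` in `ℙ^{n-1}` (taken with a representative normalized by `a j = 1`) is an
isolated singularity, weighted homogeneous of some total degree `d` with `p ∤ d`,
and does not lie on the hypersurface `f^(δ') = 0`. -/
def HypA {K : Type*} [Field K] {n : ℕ} (p δ δ' : ℕ) (f : MvPolynomial (Fin n) K) : Prop :=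
  ¬ (p ∣ δ) ∧ ¬ (p ∣ δ') ∧
  ∀ (a : Fin n → K) (j : Fin n), a j = 1 →
    eval a (homogeneousComponent δ f) = 0 →
    (∀ i, eval a (pderiv i (homogeneousComponent δ f)) = 0) →
    IsIsolatedCriticalAtZero (chartPoly (homogeneousComponent δ f) j a) ∧
    (∃ d : ℕ, ¬ (p ∣ d) ∧ WeightedHomogSing (chartPoly (homogeneousComponent δ f) j a) d) ∧
    eval a (homogeneousComponent δ' f) ≠ 0

/-- Hypothesis (B): `p ∣ δ`, `p ∤ δ'`, the common zero locus of the `∂f^(δ)/∂x_i` in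
`ℙ^{n-1}` is finite and nonempty, and none of its points lies on the hypersurface
`f^(δ') = 0`. -/
def HypB {K : Type*} [Field K] {n : ℕ} (p δ δ' : ℕ) (f : MvPolynomial (Fin n) K) : Prop :=
  (p ∣ δ) ∧ ¬ (p ∣ δ') ∧
  (projZeros {g | ∃ i, g = pderiv i (homogeneousComponent δ f)}).Finite ∧
  (projZeros {g | ∃ i, g = pderiv i (homogeneousComponent δ f)}).Nonempty ∧
  ∀ a : Fin n → K, a ≠ 0 → (∀ i, eval a (pderiv i (homogeneousComponent δ f)) = 0) →
    eval a (homogeneousComponent δ' f) ≠ 0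

/-- The localization of the polynomial ring at the maximal ideal of the point `b`. -/
instance evalKerPrime (K : Type*) [Field K] (σ : Type*) (b : σ → K) :
    (RingHom.ker (eval b : MvPolynomial σ K →+* K)).IsPrime := RingHom.ker_isPrime _

/-- The local ring of affine space at the point `b`, i.e. the localization of the
polynomial ring at the maximal ideal of polynomials vanishing at `b`. -/
abbrev LocAt (K : Type*) [Field K] {σ : Type*} (b : σ → K) :=
  Localization.AtPrime (RingHom.ker (eval b : MvPolynomial σ K →+* K))

/-- The Milnor number of `h` at the point `b`: the `K`-dimension of the quotient of the
local ring at `b` by the ideal generated by the partial derivatives of `h`. -/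
def milnorAt {K : Type*} [Field K] {σ : Type*} (b : σ → K) (h : MvPolynomial σ K) : ℕ :=
  Module.finrank K
    ((LocAt K b) ⧸ Ideal.span (Set.range fun i =>
      algebraMap (MvPolynomial σ K) (LocAt K b) (pderiv i h)))

section Aux

variable {K : Type*}

lemma degree_add'' {σ : Type*} (a b : σ →₀ ℕ) :
    Finsupp.degree (a + b) = Finsupp.degree a + Finsupp.degree b := by
  simp only [Finsupp.degree_eq_weight_one]
  exact map_add _ a b

lemma degree_single'' {σ : Type*} (i : σ) (k : ℕ) :
    Finsupp.degree (Finsupp.single i k) = k := by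
  rcases eq_or_ne k 0 with rfl | h
  · simp
  · rw [Finsupp.degree_apply, Finsupp.support_single_ne_zero _ h, Finset.sum_singleton,
      Finsupp.single_eq_same]

lemma isHomogeneous_pderiv' [CommRing K] {σ : Type*} [DecidableEq σ]
    {F : MvPolynomial σ K} {δ : ℕ} (hF : F.IsHomogeneous δ) (i : σ) :
    (pderiv i F).IsHomogeneous (δ - 1) := by
  have hrep : pderiv i F = ∑ s ∈ F.support, pderiv i (monomial s (coeff s F)) := by
    rw [← map_sum, support_sum_monomial_coeff]
  rw [hrep]
  apply IsHomogeneous.sum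
  intro s hs
  rw [pderiv_monomial]
  rcases eq_or_ne (s i) 0 with h0 | h0
  · rw [h0]
    norm_num
    exact isHomogeneous_zero _ _ _
  · apply isHomogeneous_monomial
    have hsd : Finsupp.degree s = δ := by
      by_contra hne
      exact mem_support_iff.mp hs (hF.coeff_eq_zero hne)
    have hs' : s - Finsupp.single i 1 + Finsupp.single i 1 = s := by
      ext j
      rcases eq_or_ne j i with rfl | hj
      · simp only [Finsupp.coe_add, Pi.add_apply, Finsupp.coe_tsub, Pi.sub_apply,
          Finsupp.single_eq_same]
        omega
      · simp [Finsupp.single_eq_of_ne' (Ne.symm hj)]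
    have hdeg := congrArg Finsupp.degree hs'
    rw [degree_add'', degree_single''] at hdeg
    omega

lemma isHomogeneous_eval_smul [CommSemiring K] {σ : Type*}
    {F : MvPolynomial σ K} {δ : ℕ} (hF : F.IsHomogeneous δ) (t : K) (v : σ → K) :
    eval (t • v) F = t ^ δ * eval v F := by
  rw [eval_eq, eval_eq, Finset.mul_sum]
  apply Finset.sum_congr rfl
  intro s hs
  have hsd : Finsupp.degree s = δ := by
    by_contra hne
    exact mem_support_iff.mp hs (hF.coeff_eq_zero hne)
  have h1 : ∀ i ∈ s.support, (t • v) i ^ s i = t ^ s i * v i ^ s i := by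
    intro i _
    rw [Pi.smul_apply, smul_eq_mul, mul_pow]
  rw [Finset.prod_congr rfl h1, Finset.prod_mul_distrib, Finset.prod_pow_eq_pow_sum]
  have : ∑ i ∈ s.support, s i = δ := hsd
  rw [this]
  ring

lemma homogeneousComponent_mul_right [CommSemiring K] {σ : Type*}
    {g : MvPolynomial σ K} {d : ℕ} (hg : g.IsHomogeneous d) (p : MvPolynomial σ K) {N : ℕ}
    (hdN : d ≤ N) :
    homogeneousComponent N (p * g) = homogeneousComponent (N - d) p * g := by
  conv_lhs => rw [← sum_homogeneousComponent p]
  rw [Finset.sum_mul, map_sum]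
  have hterm : ∀ k, homogeneousComponent N (homogeneousComponent k p * g)
      = if k = N - d then homogeneousComponent k p * g else 0 := by
    intro k
    rw [homogeneousComponent_of_mem
      ((mem_homogeneousSubmodule _ _).mpr ((homogeneousComponent_isHomogeneous k p).mul hg))]
    by_cases h : k = N - d
    · subst h
      rw [if_pos (by omega), if_pos rfl]
    · rw [if_neg (by omega), if_neg h]
  simp_rw [hterm]
  rw [Finset.sum_ite_eq' (Finset.range (p.totalDegree + 1)) (N - d)
    (fun k => homogeneousComponent k p * g)]
  by_cases hmem : N - d ∈ Finset.range (p.totalDegree + 1)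
  · rw [if_pos hmem]
  · rw [if_neg hmem, homogeneousComponent_eq_zero, zero_mul]
    simp only [Finset.mem_range] at hmem
    omega

end Aux

/-- If `F` is homogeneous of degree `δ ≥ 2` and `F = 0` defines a smooth hypersurface in
`ℙ^{n-1}`, then the common zero locus of `∂F/∂x_1, …, ∂F/∂x_n` in `ℙ^{n-1}` is finite. -/
theorem statement14 {K : Type*} [Field K] [IsAlgClosed K] {n : ℕ} (hn : 2 ≤ n)
    (F : MvPolynomial (Fin n) K) (δ : ℕ) (hδ : 2 ≤ δ) (hF : F.IsHomogeneous δ)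
    (hsmooth : SmoothProj F) :
    (projZeros {g | ∃ i, g = pderiv i F}).Finite := by
  classical
  set I : Ideal (MvPolynomial (Fin n) K) :=
    Ideal.span ({F} ∪ Set.range fun i => pderiv i F) with hI
  have hpd : ∀ i, (pderiv i F).IsHomogeneous (δ - 1) := fun i => isHomogeneous_pderiv' hF i
  -- Nullstellensatz: some power of each `X i` lies in `I`
  have hrad : ∀ i : Fin n, ∃ k : ℕ, (X i : MvPolynomial (Fin n) K) ^ k ∈ I := by
    intro i
    have hzl : MvPolynomial.zeroLocus K I ⊆ {0} := by
      intro v hv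
      rw [MvPolynomial.mem_zeroLocus_iff] at hv
      simp only [Set.mem_singleton_iff]
      by_contra hv0
      refine hsmooth v hv0 ⟨?_, ?_⟩
      · exact hv F (Ideal.subset_span (Or.inl rfl))
      · intro j; exact hv _ (Ideal.subset_span (Or.inr ⟨j, rfl⟩))
    have hXi : (X i : MvPolynomial (Fin n) K) ∈ I.radical := by
      rw [← MvPolynomial.vanishingIdeal_zeroLocus_eq_radical (K := K)]
      rw [MvPolynomial.mem_vanishingIdeal_iff]
      intro v hv
      have hv0 : v = 0 := hzl hv
      subst hv0
      simp
    exact Ideal.mem_radical_iff.mp hXi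
  choose k hk using hrad
  set N : ℕ := δ + ∑ i, k i with hN
  have hNδ : δ ≤ N := Nat.le_add_right _ _
  have hXN : ∀ i, (X i : MvPolynomial (Fin n) K) ^ N ∈ I := by
    intro i
    have hki : k i ≤ N :=
      le_trans (Finset.single_le_sum (f := k) (fun _ _ => Nat.zero_le _) (Finset.mem_univ i))
        (Nat.le_add_left _ _)
    have hsplit : (X i : MvPolynomial (Fin n) K) ^ N = X i ^ (k i) * X i ^ (N - k i) := by
      rw [← pow_add]
      congr 1
      omega
    rw [hsplit]
    exact Ideal.mul_mem_right _ _ (hk i)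
  -- the inhomogeneous ideal
  set I' : Ideal (MvPolynomial (Fin n) K) :=
    Ideal.span ({F - 1} ∪ Set.range fun i => pderiv i F) with hI'
  have hpdI' : ∀ i, pderiv i F ∈ I' := fun i => Ideal.subset_span (Or.inr ⟨i, rfl⟩)
  have hF1I' : F - 1 ∈ I' := Ideal.subset_span (Or.inl rfl)
  -- decomposition with degree control
  have hdecomp : ∀ i : Fin n, ∃ h : MvPolynomial (Fin n) K,
      h.totalDegree ≤ N - δ ∧ X i ^ N - h ∈ I' := by
    intro i
    have hmem : (X i : MvPolynomial (Fin n) K) ^ N ∈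
        Ideal.span {F} ⊔ Ideal.span (Set.range fun i => pderiv i F) := by
      rw [← Ideal.span_union]
      exact hXN i
    rw [Submodule.mem_sup] at hmem
    obtain ⟨a, ha, b, hb, hab⟩ := hmem
    rw [Ideal.mem_span_singleton'] at ha
    obtain ⟨h₀, rfl⟩ := ha
    rw [Ideal.mem_span_range_iff_exists_fun] at hb
    obtain ⟨c, rfl⟩ := hb
    have hcomp := congrArg (homogeneousComponent N) hab
    rw [map_add, homogeneousComponent_mul_right hF h₀ hNδ, map_sum] at hcomp
    have hterm : ∀ j : Fin n, homogeneousComponent N (c j * pderiv j F)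
        = homogeneousComponent (N - (δ - 1)) (c j) * pderiv j F :=
      fun j => homogeneousComponent_mul_right (hpd j) (c j) (by omega)
    simp_rw [hterm] at hcomp
    rw [homogeneousComponent_of_mem
      ((mem_homogeneousSubmodule _ _).mpr (isHomogeneous_X_pow i N)), if_pos rfl] at hcomp
    refine ⟨homogeneousComponent (N - δ) h₀, (homogeneousComponent_isHomogeneous _ _).totalDegree_le, ?_⟩
    have heq : (X i : MvPolynomial (Fin n) K) ^ N - homogeneousComponent (N - δ) h₀
        = homogeneousComponent (N - δ) h₀ * (F - 1)
          + ∑ j, homogeneousComponent (N - (δ - 1)) (c j) * pderiv j F := by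
      rw [← hcomp]
      ring
    rw [heq]
    exact Ideal.add_mem _ (Ideal.mul_mem_left _ _ hF1I')
      (Ideal.sum_mem _ fun j _ => Ideal.mul_mem_left _ _ (hpdI' j))
  set B : ℕ := n * (N - 1) with hB
  -- reduction modulo I' to bounded degree
  have hred : ∀ m : ℕ, ∀ g : MvPolynomial (Fin n) K, g.totalDegree ≤ m →
      ∃ g', g'.totalDegree ≤ B ∧ g - g' ∈ I' := by
    intro m
    induction m using Nat.strong_induction_on with
    | _ m IH =>
      intro g hg
      have hmono : ∀ s ∈ g.support, ∃ g',
          g'.totalDegree ≤ B ∧ monomial s (coeff s g) - g' ∈ I' := by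
        intro s hs
        have hcs : coeff s g ≠ 0 := mem_support_iff.mp hs
        have hdegmon : (monomial s (coeff s g)).totalDegree = Finsupp.degree s :=
          totalDegree_monomial _ hcs
        by_cases hsB : Finsupp.degree s ≤ B
        · exact ⟨monomial s (coeff s g), by rw [hdegmon]; exact hsB, by simp⟩
        · push_neg at hsB
          have hex : ∃ i, N ≤ s i := by
            by_contra hall
            push_neg at hall
            have h1 : Finsupp.degree s ≤ ∑ i : Fin n, s i := by
              rw [Finsupp.degree_apply]
              exact Finset.sum_le_sum_of_subset (Finset.subset_univ _)
            have h2 : ∑ i : Fin n, s i ≤ ∑ _i : Fin n, (N - 1) :=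
              Finset.sum_le_sum fun i _ => by have := hall i; omega
            rw [Finset.sum_const, Finset.card_univ, Fintype.card_fin, smul_eq_mul] at h2
            omega
          obtain ⟨i, hiN⟩ := hex
          obtain ⟨h, hhdeg, hhI⟩ := hdecomp i
          set t : (Fin n) →₀ ℕ := s - Finsupp.single i N with ht
          have hst : Finsupp.single i N + t = s := by
            ext j
            rcases eq_or_ne j i with rfl | hj
            · simp only [ht, Finsupp.coe_add, Pi.add_apply, Finsupp.coe_tsub, Pi.sub_apply,
                Finsupp.single_eq_same]
              omega
            · simp [ht, Finsupp.single_eq_of_ne' (Ne.symm hj)]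
          have hsplit : monomial s (coeff s g) = (X i ^ N) * monomial t (coeff s g) := by
            rw [X_pow_eq_monomial, monomial_mul, one_mul, hst]
          have hdegt : N + Finsupp.degree t = Finsupp.degree s := by
            rw [← hst, degree_add'', degree_single'']
          have hdiff : monomial s (coeff s g) - h * monomial t (coeff s g) ∈ I' := by
            have heq : monomial s (coeff s g) - h * monomial t (coeff s g)
                = (X i ^ N - h) * monomial t (coeff s g) := by
              rw [hsplit]; ring
            rw [heq]
            exact Ideal.mul_mem_right _ _ hhI
          have hdegsmall : (h * monomial t (coeff s g)).totalDegree < m := by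
            have h1 := totalDegree_mul h (monomial t (coeff s g))
            have h2 : (monomial t (coeff s g)).totalDegree = Finsupp.degree t :=
              totalDegree_monomial _ hcs
            have h3 : Finsupp.degree s ≤ m := by
              have h4 : Finsupp.degree s ≤ g.totalDegree := le_totalDegree hs
              omega
            omega
          obtain ⟨g'', hg''B, hg''I⟩ := IH _ hdegsmall _ le_rfl
          refine ⟨g'', hg''B, ?_⟩
          have heq : monomial s (coeff s g) - g''
              = (monomial s (coeff s g) - h * monomial t (coeff s g))
                + (h * monomial t (coeff s g) - g'') := by ring
          rw [heq]
          exact Ideal.add_mem _ hdiff hg''I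
      choose g' hg'B hg'I using hmono
      refine ⟨∑ s ∈ g.support.attach, g' s s.2, ?_, ?_⟩
      · refine le_trans (totalDegree_finset_sum _ _) ?_
        exact Finset.sup_le fun s _ => hg'B s s.2
      · have heq : g - ∑ s ∈ g.support.attach, g' s s.2
            = ∑ s ∈ g.support.attach, (monomial s.1 (coeff s.1 g) - g' s s.2) := by
          rw [Finset.sum_sub_distrib]
          congr 1
          conv_lhs => rw [← support_sum_monomial_coeff g]
          rw [← Finset.sum_attach g.support (fun s => monomial s (coeff s g))]
        rw [heq]
        exact Ideal.sum_mem _ fun s _ => hg'I s s.2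
  -- the quotient ring is finite dimensional
  have hAfin : Module.Finite K (MvPolynomial (Fin n) K ⧸ I') := by
    let φ : (restrictTotalDegree (Fin n) K B) →ₗ[K] (MvPolynomial (Fin n) K ⧸ I') :=
      (Ideal.Quotient.mkₐ K I').toLinearMap.comp (Submodule.subtype _)
    apply Module.Finite.of_surjective φ
    intro a
    obtain ⟨g, rfl⟩ := Ideal.Quotient.mk_surjective a
    obtain ⟨g', hg'B, hg'I⟩ := hred g.totalDegree g le_rfl
    refine ⟨⟨g', ?_⟩, ?_⟩
    · rw [mem_restrictTotalDegree]
      exact hg'B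
    · show Ideal.Quotient.mkₐ K I' g' = Ideal.Quotient.mk I' g
      rw [Ideal.Quotient.mkₐ_eq_mk]
      exact Ideal.Quotient.eq.mpr (by rw [← neg_sub]; exact I'.neg_mem hg'I)
  -- the set of normalized solutions is finite
  set W : Set (Fin n → K) := {w | eval w F = 1 ∧ ∀ i, eval w (pderiv i F) = 0} with hW
  have haeval : ∀ (w : Fin n → K) (q : MvPolynomial (Fin n) K), aeval w q = eval w q := by
    intro w q
    rw [← coe_aeval_eq_eval]
    rfl
  have hker : ∀ w : W, ∀ q ∈ I', aeval (w : Fin n → K) q = 0 := by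
    rintro ⟨w, hw1, hw2⟩ q hq
    have hle : I' ≤ RingHom.ker (eval w) := by
      rw [hI', Ideal.span_le]
      rintro q' hq'
      rcases hq' with hq' | ⟨j, rfl⟩
      · rw [Set.mem_singleton_iff] at hq'
        subst hq'
        simp only [SetLike.mem_coe, RingHom.mem_ker, map_sub, map_one, hw1, sub_self]
      · simp only [SetLike.mem_coe, RingHom.mem_ker]
        exact hw2 j
    rw [haeval]
    exact hle hq
  have hWfin : W.Finite := by
    let ψ : W → ((MvPolynomial (Fin n) K ⧸ I') →ₐ[K] K) := fun w =>
      Ideal.Quotient.liftₐ I' (aeval (w : Fin n → K)) (hker w)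
    have hinj : Function.Injective ψ := by
      intro w w' hww
      apply Subtype.ext
      funext i
      have happ := congrArg (fun f => f (Ideal.Quotient.mk I' (X i))) hww
      simpa [ψ, Ideal.Quotient.liftₐ_apply, Ideal.Quotient.lift_mk, haeval] using happ
    have hLI : LinearIndependent K (fun w : W => (ψ w).toLinearMap) :=
      (linearIndependent_toLinearMap K (MvPolynomial (Fin n) K ⧸ I') K).comp ψ hinj
    haveI : FiniteDimensional K (MvPolynomial (Fin n) K ⧸ I') := hAfin
    have hfin : Finite W := hLI.finite
    exact Set.finite_coe_iff.mp hfin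
  -- points of W are nonzero
  have hWne : ∀ w ∈ W, w ≠ 0 := by
    rintro w ⟨hw1, _⟩ rfl
    have h0 : constantCoeff F = (0 : K) := by
      rw [constantCoeff_eq]
      exact hF.coeff_eq_zero (by rw [map_zero]; omega)
    rw [show ((0 : Fin n → K)) = (0 : Fin n → K) from rfl, eval_zero] at hw1
    rw [h0] at hw1
    exact one_ne_zero hw1.symm
  -- conclude
  apply Set.Finite.subset (hWfin.dependent_image (fun w hw => Projectivization.mk K w (hWne w hw)))
  intro z hz
  obtain ⟨v, hv, hmk, hvan⟩ := hz
  have hpdv : ∀ i, eval v (pderiv i F) = 0 := fun i => hvan _ ⟨i, rfl⟩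
  have hFv : eval v F ≠ 0 := fun h0 => hsmooth v hv ⟨h0, hpdv⟩
  obtain ⟨t, ht⟩ := IsAlgClosed.exists_pow_nat_eq ((eval v F)⁻¹) (show 0 < δ by omega)
  have htne : t ≠ 0 := by
    intro h0
    rw [h0, zero_pow (by omega)] at ht
    exact inv_ne_zero hFv ht.symm
  have hwW : t • v ∈ W := by
    constructor
    · rw [isHomogeneous_eval_smul hF t v, ht, inv_mul_cancel₀ hFv]
    · intro i
      rw [isHomogeneous_eval_smul (hpd i) t v, hpdv i, mul_zero]
  refine ⟨t • v, hwW, ?_⟩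
  rw [← hmk]
  exact ((Projectivization.mk_eq_mk_iff' K v (t • v) hv (hWne _ hwW)).mpr
    ⟨t⁻¹, by rw [smul_smul, inv_mul_cancel₀ htne, one_smul]⟩).symm


end
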